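/- If (X, ‖·‖) is a real seminormed vector space, then the Cauchy–Schwarz–Bunjakowsky inequality holds for the product ⟨·|·⟩♠: for all x, y ∈ X, |⟨x|y⟩♠| ≤ ‖x‖·‖y‖. -/

import Mathlib

/-! Both ‖u + v‖ and ‖u - v‖ lie between |‖u‖ - ‖v‖| and ‖u‖ + ‖v‖, so the polarization
difference ‖u + v‖² - ‖u - v‖² is at most (‖u‖ + ‖v‖)² - (‖u‖ - ‖v‖)² = 4‖u‖‖v‖ in absolute
value. For the normalized vectors ‖x‖⁻¹ • x and ‖y‖⁻¹ • y this bound is at most 4. -/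

theorem abs_norm_add_sq_sub_norm_sub_sq_le {E : Type*} [SeminormedAddCommGroup E] (u v : E) :
    |‖u + v‖ ^ 2 - ‖u - v‖ ^ 2| ≤ 4 * ‖u‖ * ‖v‖ := by
  have add_le : ‖u + v‖ ≤ ‖u‖ + ‖v‖ := norm_add_le u v
  have sub_le : ‖u - v‖ ≤ ‖u‖ + ‖v‖ := norm_sub_le u v
  have le_add : |‖u‖ - ‖v‖| ≤ ‖u + v‖ := by
    simpa using abs_norm_sub_norm_le u (-v)
  have le_sub : |‖u‖ - ‖v‖| ≤ ‖u - v‖ := abs_norm_sub_norm_le u v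
  have sq_add_le : ‖u + v‖ ^ 2 ≤ (‖u‖ + ‖v‖) ^ 2 := by gcongr
  have sq_sub_le : ‖u - v‖ ^ 2 ≤ (‖u‖ + ‖v‖) ^ 2 := by gcongr
  have le_sq_add : (‖u‖ - ‖v‖) ^ 2 ≤ ‖u + v‖ ^ 2 := by
    rw [← sq_abs]; gcongr
  have le_sq_sub : (‖u‖ - ‖v‖) ^ 2 ≤ ‖u - v‖ ^ 2 := by
    rw [← sq_abs]; gcongr
  rw [abs_le]
  constructor <;> nlinarith

theorem norm_inv_norm_smul_le_one {E : Type*} [SeminormedAddCommGroup E] [NormedSpace ℝ E]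
    (x : E) : ‖‖x‖⁻¹ • x‖ ≤ 1 :=
  mem_closedBall_zero_iff.1 (inv_norm_smul_mem_unitClosedBall x)

theorem stmt_3 {X : Type*} [SeminormedAddCommGroup X] [NormedSpace ℝ X]
    (sp : X → X → ℝ)
    (hsp : ∀ x y, sp x y =
      if ‖x‖ * ‖y‖ = 0 then 0
      else (1/4) * ‖x‖ * ‖y‖ *
        (‖(‖x‖)⁻¹ • x + (‖y‖)⁻¹ • y‖ ^ 2 - ‖(‖x‖)⁻¹ • x - (‖y‖)⁻¹ • y‖ ^ 2)) :
    ∀ x y : X, |sp x y| ≤ ‖x‖ * ‖y‖ := by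
  intro x y
  rw [hsp]
  split_ifs
  · simpa using mul_nonneg (norm_nonneg x) (norm_nonneg y)
  set u := ‖x‖⁻¹ • x
  set v := ‖y‖⁻¹ • y
  have huv : ‖u‖ * ‖v‖ ≤ 1 :=
    mul_le_one₀ (norm_inv_norm_smul_le_one x) (norm_nonneg _) (norm_inv_norm_smul_le_one y)
  calc |1/4 * ‖x‖ * ‖y‖ * (‖u + v‖ ^ 2 - ‖u - v‖ ^ 2)|
      = 1/4 * ‖x‖ * ‖y‖ * |‖u + v‖ ^ 2 - ‖u - v‖ ^ 2| := by
        rw [abs_mul, abs_of_nonneg (by positivity)]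
    _ ≤ 1/4 * ‖x‖ * ‖y‖ * (4 * ‖u‖ * ‖v‖) := by
        gcongr; exact abs_norm_add_sq_sub_norm_sub_sq_le u v
    _ ≤ ‖x‖ * ‖y‖ := by
        nlinarith [mul_nonneg (norm_nonneg x) (norm_nonneg y)]
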